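/- arXiv:1908.03659 — 3 statements merged into one kernel-verified Lean document; each statement's English description precedes it below -/
import Mathlib

section
/- In the uniform attachment graph $G_{n,k}$, for any positive integers $\ell$ and $m$, the maximum over all $\ell$-subsets $X \subseteq [n]$ of the probability $\mathbb{P}(|N(X)| < m)$ is attained at $X = \{n-\ell+1, n-\ell+2, \dots, n\}$, the set of the $\ell$ largest vertices. -/
open Finset
open scoped Classical

/-- The set of valid choice sequences for the uniform attachment graph on `n`
vertices (labelled `0, …, n-1`, corresponding to `1, …, n` in the paper): each
vertex `j ≥ 1` makes `k` choices among the earlier vertices `0, …, j-1`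
(vertex `0` is forced to the dummy value `0`, which creates no edge). -/
noncomputable def UAValid (n k : ℕ) : Finset (Fin n → Fin k → Fin n) :=
  Finset.univ.filter (fun z => ∀ j i, (z j i : ℕ) < max (j : ℕ) 1)

/-- The uniform attachment graph determined by a choice sequence `z`:
`u` and `v` are adjacent iff one of them chose the other. -/
noncomputable def UAGraph (n k : ℕ) (z : Fin n → Fin k → Fin n) :
    SimpleGraph (Fin n) :=
  SimpleGraph.fromRel (fun u v => (u : ℕ) < v ∧ ∃ i, z v i = u)

/-- The probability of an event `E` for the uniform attachment graph `G_{n,k}`,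
with all valid choice sequences equally likely. -/
noncomputable def UAProb (n k : ℕ) (E : (Fin n → Fin k → Fin n) → Prop) : ℝ :=
  ((UAValid n k).filter E).card / (UAValid n k).card

/-- The external neighborhood `N(X)` of a vertex set `X`. -/
noncomputable def extNbhd {V : Type*} [Fintype V] (G : SimpleGraph V)
    (X : Finset V) : Finset V :=
  Finset.univ.filter (fun u => u ∉ X ∧ ∃ x ∈ X, G.Adj x u)

/-- The set of the `ℓ` largest vertices `{n-ℓ+1, …, n}` (in `0`-indexed form,
the vertices `v` with `v ≥ n - ℓ`). -/
noncomputable def topSet (n ℓ : ℕ) : Finset (Fin n) :=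
  Finset.univ.filter (fun v => n - ℓ ≤ (v : ℕ))

/-!
Shifting argument. Let `a ∈ X` and `b = a + 1 ∉ X`, and let `τ` be the transposition of `a`
and `b`. The map `swapChoices a b` relabels every choice through `τ` and, for each `i`, exchanges
the `i`-th choices of `a` and `b`, except when `b`'s `i`-th choice is `a`: then that edge and
`a`'s choice are kept, since relabelling would make `a` choose the later vertex `b`. As `a` and
`b` are consecutive, this is an involution of the valid choice sequences, and the neighbourhood
of `τ X` in the new graph lies inside `τ N(X)`. So moving `a` to `a + 1` can only increase
`ℙ(|N(X)| < m)`. Each such move decreases `∑_{x ∈ X} (n - x)`, and a set admitting no move is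
upward closed, hence the set of the `|X|` largest vertices.
-/

section Shifting

variable {n : ℕ}

lemma card_topSet {ℓ : ℕ} (h : ℓ ≤ n) : (topSet n ℓ).card = ℓ := by
  have : topSet n ℓ = univ \ univ.filter (fun v : Fin n => (v : ℕ) < n - ℓ) := by
    ext v; simp [topSet]
  rw [this, card_sdiff_of_subset (filter_subset _ _), card_univ, Fintype.card_fin,
    Fin.card_filter_val_lt]
  omega

lemma Ici_subset_of_succ_mem {X : Finset (Fin n)}
    (hX : ∀ a ∈ X, ∀ b : Fin n, (b : ℕ) = a + 1 → b ∈ X) {x : Fin n} (hx : x ∈ X) :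
    Ici x ⊆ X := by
  suffices ∀ d (v : Fin n), (v : ℕ) = x + d → v ∈ X by
    intro v hv
    exact this (v - x) v (by have := mem_Ici.mp hv; omega)
  intro d
  induction d with
  | zero => intro v hv; rwa [show v = x from Fin.ext hv]
  | succ d ih =>
    intro v hv
    exact hX ⟨x + d, by omega⟩ (ih _ rfl) v hv

lemma eq_topSet_of_succ_mem {X : Finset (Fin n)}
    (hX : ∀ a ∈ X, ∀ b : Fin n, (b : ℕ) = a + 1 → b ∈ X) : X = topSet n X.card := by
  have hsub : X ⊆ topSet n X.card := by
    intro x hx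
    have := card_le_card (Ici_subset_of_succ_mem hX hx)
    rw [Fin.card_Ici] at this
    simp only [topSet, mem_filter, mem_univ, true_and]
    omega
  have hcard : X.card ≤ n := by simpa using card_le_univ X
  exact eq_of_subset_of_card_le hsub (card_topSet hcard).le

lemma sum_map_swap_lt {X : Finset (Fin n)} {a b : Fin n} (hab : (b : ℕ) = a + 1)
    (ha : a ∈ X) (hb : b ∉ X) :
    ∑ x ∈ X.map (Equiv.swap a b).toEmbedding, (n - (x : ℕ)) < ∑ x ∈ X, (n - (x : ℕ)) := by
  simp only [sum_map, Equiv.coe_toEmbedding]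
  refine sum_lt_sum (fun x hx => ?_) ⟨a, ha, ?_⟩
  · rcases eq_or_ne x a with rfl | hxa
    · rw [Equiv.swap_apply_left]; omega
    · rw [Equiv.swap_apply_of_ne_of_ne hxa (by rintro rfl; exact hb hx)]
  · rw [Equiv.swap_apply_left]; have := a.isLt; omega

theorem le_apply_topSet_of_shift {β : Type*} [Preorder β] {f : Finset (Fin n) → β}
    (hshift : ∀ (X : Finset (Fin n)) (a b : Fin n), (b : ℕ) = a + 1 → a ∈ X → b ∉ X →
      f X ≤ f (X.map (Equiv.swap a b).toEmbedding))
    (X : Finset (Fin n)) : f X ≤ f (topSet n X.card) := by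
  by_cases hgap : ∃ a ∈ X, ∃ b : Fin n, (b : ℕ) = a + 1 ∧ b ∉ X
  · obtain ⟨a, ha, b, hab, hb⟩ := hgap
    have hdec := sum_map_swap_lt hab ha hb
    calc f X ≤ f (X.map (Equiv.swap a b).toEmbedding) := hshift X a b hab ha hb
      _ ≤ f (topSet n (X.map (Equiv.swap a b).toEmbedding).card) :=
        le_apply_topSet_of_shift hshift (X.map (Equiv.swap a b).toEmbedding)
      _ = f (topSet n X.card) := by rw [card_map]
  · push Not at hgap
    rw [← eq_topSet_of_succ_mem hgap]
termination_by ∑ x ∈ X, (n - (x : ℕ))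
decreasing_by exact hdec

end Shifting

section Attachment

variable {n k : ℕ} {z : Fin n → Fin k → Fin n}

lemma mem_UAValid : z ∈ UAValid n k ↔ ∀ j i, (z j i : ℕ) < max (j : ℕ) 1 := by
  simp [UAValid]

lemma adj_of_choice_eq (hz : z ∈ UAValid n k) {v w : Fin n} {i : Fin k} (h : z v i = w)
    (hvw : v ≠ w) : (UAGraph n k z).Adj v w := by
  have hlt := mem_UAValid.mp hz v i
  rw [h] at hlt
  have : (w : ℕ) ≠ v := fun h => hvw (Fin.ext h.symm)
  rw [UAGraph, SimpleGraph.fromRel_adj]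
  exact ⟨hvw, Or.inr ⟨by omega, i, h⟩⟩

lemma UAProb_le_of_injOn {E F : (Fin n → Fin k → Fin n) → Prop}
    (f : (Fin n → Fin k → Fin n) → Fin n → Fin k → Fin n)
    (hf : ∀ z ∈ UAValid n k, E z → f z ∈ UAValid n k ∧ F (f z))
    (hinj : Set.InjOn f (UAValid n k)) : UAProb n k E ≤ UAProb n k F := by
  unfold UAProb
  apply div_le_div_of_nonneg_right ?_ (Nat.cast_nonneg _)
  norm_cast
  refine card_le_card_of_injOn f (fun z hz => ?_)
    (hinj.mono (coe_subset.mpr (filter_subset E _)))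
  obtain ⟨hzv, hzE⟩ := mem_filter.mp hz
  exact mem_filter.mpr (hf z hzv hzE)

noncomputable def swapChoices (a b : Fin n) (z : Fin n → Fin k → Fin n) :
    Fin n → Fin k → Fin n :=
  fun v i =>
    if v = a then (if z b i = a then z a i else z b i)
    else if v = b then (if z b i = a then a else z a i)
    else Equiv.swap a b (z v i)

variable {a b : Fin n}

lemma swapChoices_mem_UAValid (hab : (b : ℕ) = a + 1) (hz : z ∈ UAValid n k) :
    swapChoices a b z ∈ UAValid n k := by
  rw [mem_UAValid] at hz ⊢
  intro v i
  have ha := hz a i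
  have hb := hz b i
  have hv := hz v i
  clear hz
  obtain rfl | hva := eq_or_ne v a
  · simp only [swapChoices, if_pos]
    split_ifs <;> simp only [Fin.ext_iff] at * <;> omega
  obtain rfl | hvb := eq_or_ne v b
  · simp only [swapChoices, if_neg hva, if_pos]
    split_ifs <;> simp only [Fin.ext_iff] at * <;> omega
  · simp only [swapChoices, if_neg hva, if_neg hvb, Equiv.swap_apply_def]
    split_ifs <;> simp only [Fin.ext_iff] at * <;> omega

lemma swapChoices_swapChoices (hab : (b : ℕ) = a + 1) (hz : z ∈ UAValid n k) :
    swapChoices a b (swapChoices a b z) = z := by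
  rw [mem_UAValid] at hz
  funext v i
  have ha := hz a i
  have hb := hz b i
  have hv := hz v i
  clear hz
  obtain rfl | hva := eq_or_ne v a
  · simp only [swapChoices, if_pos]
    split_ifs <;> simp only [Fin.ext_iff, not_true_eq_false] at * <;> omega
  obtain rfl | hvb := eq_or_ne v b
  · simp only [swapChoices, if_neg hva, if_pos]
    split_ifs <;> simp only [Fin.ext_iff, not_true_eq_false] at * <;> omega
  · simp only [swapChoices, if_neg hva, if_neg hvb, Equiv.swap_apply_self]

lemma adj_swap_of_swapChoices_eq (hab : (b : ℕ) = a + 1) (hz : z ∈ UAValid n k)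
    {v w : Fin n} {i : Fin k} (h : swapChoices a b z v i = w) (hvw : v ≠ w) :
    (UAGraph n k z).Adj (Equiv.swap a b v) (Equiv.swap a b w) ∨
      v = a ∧ (UAGraph n k z).Adj a b := by
  have hba : b ≠ a := by rintro rfl; omega
  have hv := mem_UAValid.mp hz
  obtain rfl | hva := eq_or_ne v a
  · by_cases hc : z b i = v
    · exact Or.inr ⟨rfl, (adj_of_choice_eq hz hc hba).symm⟩
    left
    simp only [swapChoices, if_pos, if_neg hc] at h
    have hwv : w ≠ v := h ▸ hc
    have hwb : w ≠ b := by rintro rfl; have := hv w i; rw [h] at this; omega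
    rw [Equiv.swap_apply_left, Equiv.swap_apply_of_ne_of_ne hwv hwb]
    exact adj_of_choice_eq hz h hwb.symm
  obtain rfl | hvb := eq_or_ne v b
  · left
    rw [Equiv.swap_apply_right]
    by_cases hc : z v i = a
    · simp only [swapChoices, if_neg hva, if_pos, if_pos hc] at h
      subst h
      rw [Equiv.swap_apply_left]
      exact (adj_of_choice_eq hz hc hva).symm
    simp only [swapChoices, if_neg hva, if_pos, if_neg hc] at h
    have hwa : w ≠ a := by
      rintro rfl
      have := hv w i; have := hv v i; rw [h] at *; simp only [Fin.ext_iff] at hc; omega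
    have hwb : w ≠ v := by rintro rfl; have := hv a i; rw [h] at this; omega
    rw [Equiv.swap_apply_of_ne_of_ne hwa hwb]
    exact adj_of_choice_eq hz h hwa.symm
  · left
    simp only [swapChoices, if_neg hva, if_neg hvb, Equiv.swap_apply_eq_iff] at h
    rw [Equiv.swap_apply_of_ne_of_ne hva hvb]
    refine adj_of_choice_eq hz h fun hvτw => hvw ?_
    rw [← Equiv.swap_apply_of_ne_of_ne hva hvb, hvτw, Equiv.swap_apply_self]

lemma adj_swap_of_adj_swapChoices (hab : (b : ℕ) = a + 1) (hz : z ∈ UAValid n k)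
    {v w : Fin n} (h : (UAGraph n k (swapChoices a b z)).Adj v w) :
    (UAGraph n k z).Adj (Equiv.swap a b v) (Equiv.swap a b w) ∨
      (v = a ∨ w = a) ∧ (UAGraph n k z).Adj a b := by
  rw [UAGraph, SimpleGraph.fromRel_adj] at h
  obtain ⟨hvw, ⟨-, i, hi⟩ | ⟨-, i, hi⟩⟩ := h
  · rcases adj_swap_of_swapChoices_eq hab hz hi hvw.symm with h | ⟨rfl, h⟩
    · exact Or.inl h.symm
    · exact Or.inr ⟨Or.inr rfl, h⟩
  · rcases adj_swap_of_swapChoices_eq hab hz hi hvw with h | ⟨rfl, h⟩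
    · exact Or.inl h
    · exact Or.inr ⟨Or.inl rfl, h⟩

lemma extNbhd_swapChoices_subset (hab : (b : ℕ) = a + 1) (hz : z ∈ UAValid n k)
    {X : Finset (Fin n)} (ha : a ∈ X) (hb : b ∉ X) :
    extNbhd (UAGraph n k (swapChoices a b z)) (X.map (Equiv.swap a b).toEmbedding) ⊆
      (extNbhd (UAGraph n k z) X).map (Equiv.swap a b).toEmbedding := by
  intro u hu
  simp only [extNbhd, mem_filter, mem_univ, true_and, mem_map_equiv, Equiv.symm_swap] at hu ⊢
  obtain ⟨huX, x, hx, hxu⟩ := hu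
  refine ⟨huX, ?_⟩
  rcases adj_swap_of_adj_swapChoices hab hz hxu with h | ⟨hxa | hua, h⟩
  · exact ⟨_, hx, h⟩
  · rw [hxa, Equiv.swap_apply_left] at hx
    exact absurd hx hb
  · exact ⟨a, ha, by rwa [hua, Equiv.swap_apply_left]⟩

lemma UAProb_card_extNbhd_lt_le_swap (m : ℕ) (hab : (b : ℕ) = a + 1) {X : Finset (Fin n)}
    (ha : a ∈ X) (hb : b ∉ X) :
    UAProb n k (fun z => (extNbhd (UAGraph n k z) X).card < m) ≤
      UAProb n k (fun z =>
        (extNbhd (UAGraph n k z) (X.map (Equiv.swap a b).toEmbedding)).card < m) := by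
  refine UAProb_le_of_injOn (swapChoices a b)
    (fun z hz hzm => ⟨swapChoices_mem_UAValid hab hz, ?_⟩) fun z₁ h₁ z₂ h₂ h => ?_
  · calc _ ≤ ((extNbhd (UAGraph n k z) X).map (Equiv.swap a b).toEmbedding).card :=
          card_le_card (extNbhd_swapChoices_subset hab hz ha hb)
      _ = (extNbhd (UAGraph n k z) X).card := card_map _
      _ < m := hzm
  · rw [← swapChoices_swapChoices hab h₁, h, swapChoices_swapChoices hab h₂]

end Attachment

theorem UA_worst_set_general (n k ℓ m : ℕ) (X : Finset (Fin n)) (hX : X.card = ℓ) :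
    UAProb n k (fun z => (extNbhd (UAGraph n k z) X).card < m)
      ≤ UAProb n k (fun z => (extNbhd (UAGraph n k z) (topSet n ℓ)).card < m) := by
  subst hX
  exact le_apply_topSet_of_shift
    (f := fun Y => UAProb n k (fun z => (extNbhd (UAGraph n k z) Y).card < m))
    (fun _ _ _ hab ha hb => UAProb_card_extNbhd_lt_le_swap m hab ha hb) X

/-- Among all `ℓ`-subsets `X` of the vertex set, the probability
`ℙ(|N(X)| < m)` is maximized by the set of the `ℓ` largest vertices. -/
theorem UA_worst_set (n k ℓ m : ℕ) (hl : 0 < ℓ) (hm : 0 < m) (hln : ℓ ≤ n)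
    (X : Finset (Fin n)) (hX : X.card = ℓ) :
    UAProb n k (fun z => (extNbhd (UAGraph n k z) X).card < m)
      ≤ UAProb n k (fun z => (extNbhd (UAGraph n k z) (topSet n ℓ)).card < m) :=
  UA_worst_set_general n k ℓ m X hX
end

section
/- Let $H(x) = -x\log_2 x - (1-x)\log_2(1-x)$ and let $k \ge 4$ be an integer. Then the function $g(x) = \log_2(27/4)\,(k+1)x + H(3x) - kH(x)$ has a unique zero in the open interval $(0, 1/3)$. -/
/-!
Up to the factor `log 2`, the function is `g x = log (27/4) (k+1) x + h (3x) - k h x` with `h`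
the natural-log binary entropy. Its second derivative `((k-3) - 3(k-1) x) / (x (1-x) (1-3x))`
changes sign once, at `x* = (k-3)/(3(k-1))`, so `g` is strictly convex on `[0, x*]` and strictly
concave on `[x*, 1/3]`. Moreover `g 0 = 0`, `g (1/3) = h (1/3) > 0` because
`log (27/4) = 3 h (1/3)`, and `g' → -∞` at `0⁺`, so `g` takes a negative value. A
convex-then-concave function with these boundary values has exactly one zero in `(0, 1/3)`: two
zeros would violate strict convexity if both lie left of `x*`, strict concavity if both lie right
of it, and otherwise convexity forces `g x* > 0`, after which concavity keeps `g` positive up to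
`1/3`.
-/

open Real

/-- The binary entropy function `H(x) = -x log₂ x - (1-x) log₂ (1-x)`
(with the conventions `H 0 = H 1 = 0` coming from `logb 2 0 = 0`). -/
noncomputable def binEnt (x : ℝ) : ℝ :=
  -x * Real.logb 2 x - (1 - x) * Real.logb 2 (1 - x)

open Set Filter Topology

section ZeroOfConvexConcave

variable {f : ℝ → ℝ} {a b c : ℝ}

theorem eq_of_zero_of_strictConvexOn_of_strictConcaveOn (ha : f a = 0) (hb : 0 < f b)
    (hconv : StrictConvexOn ℝ (Icc a c) f) (hconc : StrictConcaveOn ℝ (Icc c b) f)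
    {x y : ℝ} (hx : x ∈ Ioo a b) (hy : y ∈ Ioo a b) (hfx : f x = 0) (hfy : f y = 0) :
    x = y := by
  wlog hxy : x < y generalizing x y
  · rcases (not_lt.mp hxy).lt_or_eq with hyx | hyx
    · exact (this hy hx hfy hfx hyx).symm
    · exact hyx.symm
  have hay : a < y := hx.1.trans hxy
  have hxb : x < b := hxy.trans hy.2
  by_cases hyc : y ≤ c
  · have := hconv.lt_on_openSegment (left_mem_Icc.2 (hay.le.trans hyc)) ⟨hay.le, hyc⟩ hay.ne
      (Ioo_subset_openSegment ⟨hx.1, hxy⟩)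
    simp [ha, hfx, hfy] at this
  by_cases hcx : c ≤ x
  · have := hconc.lt_on_openSegment ⟨hcx, hxb.le⟩ (right_mem_Icc.2 (hcx.trans hxb.le)) hxb.ne
      (Ioo_subset_openSegment ⟨hxy, hy.2⟩)
    simp [hb.le, hfx, hfy] at this
  push Not at hyc hcx
  have hac : a < c := hx.1.trans hcx
  have hcb : c < b := hyc.trans hy.2
  have hfc : 0 < f c := by
    have := hconv.lt_on_openSegment (left_mem_Icc.2 hac.le) (right_mem_Icc.2 hac.le) hac.ne
      (Ioo_subset_openSegment ⟨hx.1, hcx⟩)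
    simpa [ha, hfx] using this
  have := hconc.lt_on_openSegment (left_mem_Icc.2 hcb.le) (right_mem_Icc.2 hcb.le) hcb.ne
    (Ioo_subset_openSegment ⟨hyc, hy.2⟩)
  rw [hfy] at this
  exact absurd this (lt_min hfc hb).not_gt

theorem existsUnique_zero_of_strictConvexOn_of_strictConcaveOn {x₀ : ℝ}
    (hf : ContinuousOn f (Icc a b)) (ha : f a = 0) (hb : 0 < f b) (hx₀ : x₀ ∈ Ioo a b)
    (hfx₀ : f x₀ < 0) (hconv : StrictConvexOn ℝ (Icc a c) f)
    (hconc : StrictConcaveOn ℝ (Icc c b) f) :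
    ∃! x, x ∈ Ioo a b ∧ f x = 0 := by
  obtain ⟨x, hx, hfx⟩ :=
    intermediate_value_Ioo hx₀.2.le (hf.mono (Icc_subset_Icc_left hx₀.1.le)) ⟨hfx₀, hb⟩
  have hxab : x ∈ Ioo a b := ⟨hx₀.1.trans hx.1, hx.2⟩
  exact ⟨x, ⟨hxab, hfx⟩, fun y hy =>
    eq_of_zero_of_strictConvexOn_of_strictConcaveOn ha hb hconv hconc hy.1 hxab hy.2 hfx⟩

end ZeroOfConvexConcave

theorem exists_lt_of_tendsto_deriv_atBot {f f' : ℝ → ℝ} {a b : ℝ} (hab : a < b)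
    (hf : ContinuousOn f (Icc a b)) (hf' : ∀ x ∈ Ioo a b, HasDerivAt f (f' x) x)
    (hlim : Tendsto f' (𝓝[>] a) atBot) : ∃ x ∈ Ioo a b, f x < f a := by
  obtain ⟨u, hau, hu⟩ := mem_nhdsGT_iff_exists_Ioc_subset.mp
    ((hlim.eventually (eventually_lt_atBot 0)).and (Ioo_mem_nhdsGT hab))
  have hub : u < b := (hu ⟨hau, le_rfl⟩).2.2
  have hanti : StrictAntiOn f (Icc a u) := by
    refine strictAntiOn_of_deriv_neg (convex_Icc a u)
      (hf.mono (Icc_subset_Icc_right hub.le)) fun x hx => ?_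
    rw [interior_Icc] at hx
    rw [(hf' x ⟨hx.1, hx.2.trans hub⟩).deriv]
    exact (hu ⟨hx.1, hx.2.le⟩).1
  exact ⟨u, ⟨hau, hub⟩, hanti ⟨le_rfl, hau.le⟩ ⟨hau.le, le_rfl⟩ hau⟩

theorem strictConvexOn_of_hasDerivAt2_pos {D : Set ℝ} (hD : Convex ℝ D)
    {f f' f'' : ℝ → ℝ} (hf : ContinuousOn f D)
    (hf' : ∀ x ∈ interior D, HasDerivAt f (f' x) x)
    (hf'' : ∀ x ∈ interior D, HasDerivAt f' (f'' x) x) (hf''₀ : ∀ x ∈ interior D, 0 < f'' x) :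
    StrictConvexOn ℝ D f := by
  have hmono : StrictMonoOn f' (interior D) := by
    refine strictMonoOn_of_deriv_pos hD.interior
      (fun x hx => (hf'' x hx).continuousAt.continuousWithinAt) fun x hx => ?_
    rw [interior_interior] at hx
    rw [(hf'' x hx).deriv]
    exact hf''₀ x hx
  refine StrictMonoOn.strictConvexOn_of_deriv hD hf fun x hx y hy hxy => ?_
  rw [(hf' x hx).deriv, (hf' y hy).deriv]
  exact hmono hx hy hxy

theorem strictConcaveOn_of_hasDerivAt2_neg {D : Set ℝ} (hD : Convex ℝ D)
    {f f' f'' : ℝ → ℝ} (hf : ContinuousOn f D)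
    (hf' : ∀ x ∈ interior D, HasDerivAt f (f' x) x)
    (hf'' : ∀ x ∈ interior D, HasDerivAt f' (f'' x) x) (hf''₀ : ∀ x ∈ interior D, f'' x < 0) :
    StrictConcaveOn ℝ D f := by
  have := strictConvexOn_of_hasDerivAt2_pos hD hf.neg (fun x hx => (hf' x hx).neg)
    (fun x hx => (hf'' x hx).neg) fun x hx => neg_pos.mpr (hf''₀ x hx)
  simpa using this.neg

theorem binEnt_eq_binEntropy_div (x : ℝ) : binEnt x = binEntropy x / log 2 := by
  rw [binEntropy_eq_negMulLog_add_negMulLog_one_sub]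
  simp only [binEnt, negMulLog, logb]
  ring

theorem log_27_div_4_eq_three_mul_binEntropy : log (27 / 4) = 3 * binEntropy (1 / 3) := by
  have h27 : log (27 / 4) = 3 * log 3 - 2 * log 2 := by
    rw [log_div (by norm_num) (by norm_num), show (27 : ℝ) = 3 ^ 3 by norm_num,
      show (4 : ℝ) = 2 ^ 2 by norm_num, log_pow, log_pow]
    push_cast
    ring
  rw [h27, binEntropy, show (1 : ℝ) - 1 / 3 = (3 / 2)⁻¹ by norm_num, inv_inv, one_div, inv_inv,
    log_div (by norm_num) (by norm_num)]
  ring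

noncomputable def entGap (K x : ℝ) : ℝ :=
  log (27 / 4) * (K + 1) * x + binEntropy (3 * x) - K * binEntropy x

noncomputable def entGapDeriv (K x : ℝ) : ℝ :=
  log (27 / 4) * (K + 1) + 3 * (log (1 - 3 * x) - log (3 * x)) - K * (log (1 - x) - log x)

noncomputable def entGapInflection (K : ℝ) : ℝ := (K - 3) / (3 * (K - 1))

section EntGap

variable {K x : ℝ}

theorem entGap_div_log_two (K x : ℝ) :
    entGap K x / log 2 = logb 2 (27 / 4) * (K + 1) * x + binEnt (3 * x) - K * binEnt x := by
  simp only [entGap, binEnt_eq_binEntropy_div, logb]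
  ring

theorem continuous_entGap (K : ℝ) : Continuous (entGap K) := by
  unfold entGap
  fun_prop

theorem entGap_zero (K : ℝ) : entGap K 0 = 0 := by
  simp [entGap]

theorem entGap_one_third (K : ℝ) : entGap K (1 / 3) = binEntropy (1 / 3) := by
  rw [entGap, log_27_div_4_eq_three_mul_binEntropy, show (3 : ℝ) * (1 / 3) = 1 by norm_num,
    binEntropy_one]
  ring

theorem hasDerivAt_entGap (hx₀ : 0 < x) (hx₁ : x < 1 / 3) :
    HasDerivAt (entGap K) (entGapDeriv K x) x := by
  have h3x : HasDerivAt (fun y => binEntropy (3 * y)) ((log (1 - 3 * x) - log (3 * x)) * 3) x :=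
    (hasDerivAt_binEntropy (by positivity) (by linarith)).comp x
      ((hasDerivAt_id x).const_mul 3 |>.congr_deriv (mul_one 3))
  have hKx : HasDerivAt (fun y => K * binEntropy y) (K * (log (1 - x) - log x)) x :=
    (hasDerivAt_binEntropy hx₀.ne' (by linarith)).const_mul K
  have hlin : HasDerivAt (fun y => log (27 / 4) * (K + 1) * y) (log (27 / 4) * (K + 1)) x :=
    (hasDerivAt_id x).const_mul _ |>.congr_deriv (mul_one _)
  exact ((hlin.add h3x).sub hKx).congr_deriv (by rw [entGapDeriv]; ring)

theorem hasDerivAt_entGapDeriv (hx₀ : 0 < x) (hx₁ : x < 1 / 3) :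
    HasDerivAt (entGapDeriv K) (((K - 3) - 3 * (K - 1) * x) / (x * (1 - x) * (1 - 3 * x))) x := by
  have h1 : (1 : ℝ) - 3 * x ≠ 0 := by linarith
  have h2 : (1 : ℝ) - x ≠ 0 := by linarith
  have hd := ((((((hasDerivAt_id x).const_mul 3).const_sub 1).log h1).sub
    (((hasDerivAt_id x).const_mul 3).log (by positivity))).const_mul 3).const_add
      (log (27 / 4) * (K + 1)) |>.sub
    (((((hasDerivAt_id x).const_sub 1).log h2).sub ((hasDerivAt_id x).log hx₀.ne')).const_mul K)
  refine hd.congr_deriv ?_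
  simp only [id]
  field_simp
  ring

theorem tendsto_entGapDeriv_nhdsGT_zero (hK : 3 < K) :
    Tendsto (entGapDeriv K) (𝓝[>] 0) atBot := by
  set r : ℝ → ℝ := fun x =>
    log (27 / 4) * (K + 1) + 3 * log (1 - 3 * x) - 3 * log 3 - K * log (1 - x) with hr
  have hsplit : (r + fun x => (K - 3) * log x) =ᶠ[𝓝[>] 0] entGapDeriv K := by
    filter_upwards [self_mem_nhdsWithin] with x (hx : 0 < x)
    simp only [hr, Pi.add_apply, entGapDeriv, log_mul three_ne_zero hx.ne']
    ring
  have hr0 : ContinuousAt r 0 := by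
    simp only [hr]
    fun_prop (disch := norm_num)
  refine Tendsto.congr' hsplit ((hr0.tendsto.mono_left nhdsWithin_le_nhds).add_atBot ?_)
  exact tendsto_log_nhdsGT_zero.const_mul_atBot (by linarith)

theorem entGapInflection_lt_one_third (hK : 1 < K) : entGapInflection K < 1 / 3 := by
  rw [entGapInflection, div_lt_iff₀ (by linarith)]
  linarith

theorem strictConvexOn_entGap (hK : 1 < K) :
    StrictConvexOn ℝ (Icc 0 (entGapInflection K)) (entGap K) := by
  have hsub : ∀ x ∈ interior (Icc 0 (entGapInflection K)), 0 < x ∧ x < 1 / 3 := by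
    intro x hx
    rw [interior_Icc] at hx
    exact ⟨hx.1, hx.2.trans (entGapInflection_lt_one_third hK)⟩
  refine strictConvexOn_of_hasDerivAt2_pos (convex_Icc _ _) (continuous_entGap K).continuousOn
    (fun x hx => hasDerivAt_entGap (hsub x hx).1 (hsub x hx).2)
    (fun x hx => hasDerivAt_entGapDeriv (hsub x hx).1 (hsub x hx).2) fun x hx => ?_
  obtain ⟨hx₀, hx₁⟩ := hsub x hx
  rw [interior_Icc, mem_Ioo, entGapInflection, lt_div_iff₀ (by linarith)] at hx
  have : 0 < 1 - 3 * x := by linarith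
  have : 0 < 1 - x := by linarith
  exact div_pos (by linarith) (by positivity)

theorem strictConcaveOn_entGap (hK : 3 ≤ K) :
    StrictConcaveOn ℝ (Icc (entGapInflection K) (1 / 3)) (entGap K) := by
  have hinf : 0 ≤ entGapInflection K := div_nonneg (by linarith) (by linarith)
  have hsub : ∀ x ∈ interior (Icc (entGapInflection K) (1 / 3)), 0 < x ∧ x < 1 / 3 := by
    intro x hx
    rw [interior_Icc] at hx
    exact ⟨hinf.trans_lt hx.1, hx.2⟩
  refine strictConcaveOn_of_hasDerivAt2_neg (convex_Icc _ _) (continuous_entGap K).continuousOn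
    (fun x hx => hasDerivAt_entGap (hsub x hx).1 (hsub x hx).2)
    (fun x hx => hasDerivAt_entGapDeriv (hsub x hx).1 (hsub x hx).2) fun x hx => ?_
  obtain ⟨hx₀, hx₁⟩ := hsub x hx
  rw [interior_Icc, mem_Ioo, entGapInflection, div_lt_iff₀ (by linarith)] at hx
  have : 0 < 1 - 3 * x := by linarith
  have : 0 < 1 - x := by linarith
  exact div_neg_of_neg_of_pos (by linarith) (by positivity)

end EntGap

theorem unique_zero_alpha2 (k : ℕ) (hk : 4 ≤ k) :
    ∃! x : ℝ, x ∈ Set.Ioo (0 : ℝ) (1 / 3) ∧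
      Real.logb 2 (27 / 4) * (k + 1) * x + binEnt (3 * x) - k * binEnt x = 0 := by
  have hK : (3 : ℝ) < k := by exact_mod_cast hk
  simp_rw [← entGap_div_log_two, div_eq_zero_iff, (log_pos one_lt_two).ne', or_false]
  obtain ⟨x₀, hx₀, hneg⟩ :=
    exists_lt_of_tendsto_deriv_atBot (by norm_num : (0 : ℝ) < 1 / 3)
      (continuous_entGap k).continuousOn (fun x hx => hasDerivAt_entGap hx.1 hx.2)
      (tendsto_entGapDeriv_nhdsGT_zero hK)
  rw [entGap_zero] at hneg
  refine existsUnique_zero_of_strictConvexOn_of_strictConcaveOn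
    (continuous_entGap k).continuousOn (entGap_zero k) ?_ hx₀ hneg
    (strictConvexOn_entGap (by linarith)) (strictConcaveOn_entGap hK.le)
  rw [entGap_one_third]
  exact binEntropy_pos (by norm_num) (by norm_num)
end

section
/- Let $G$ be a connected $(\alpha,2)$-expander graph on $n$ vertices that is not Hamiltonian, let $P$ be a longest path of $G$ and $a$ an endpoint of $P$. Then $|\operatorname{END}(P,a)| > \alpha n$. -/
open SimpleGraph

variable {V : Type*} [Fintype V] [DecidableEq V]

/-- A (nonempty) path in `G`, represented as the list of its vertices. -/
def IsPathList (G : SimpleGraph V) (L : List V) : Prop :=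
  L ≠ [] ∧ L.Chain' G.Adj ∧ L.Nodup

/-- A Pósa rotation: writing `L = P ++ v :: S`, rotating at the edge from the
last vertex of `L` to `v` produces `L' = P ++ v :: S.reverse`. -/
def Rotation (G : SimpleGraph V) (L L' : List V) : Prop :=
  ∃ (P S : List V) (v : V) (hS : S ≠ []),
    L = P ++ v :: S ∧ L' = P ++ v :: S.reverse ∧ G.Adj (S.getLast hS) v

/-- `ENDSet G L`: the set of vertices `x` that occur as the non-fixed endpoint of
some path obtained from `L` by a sequence of Pósa rotations (the first vertex of
`L` stays fixed throughout). -/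
def ENDSet (G : SimpleGraph V) (L : List V) : Set V :=
  {x | ∃ L', Relation.ReflTransGen (Rotation G) L L' ∧ L'.getLast? = some x}

/-- `G` on `n` vertices is an `(α,2)`-expander: every `X` with `|X| ≤ α n`
satisfies `|N(X)| ≥ 2|X|`, where `N(X)` is the external neighborhood. -/
def IsTwoExpander (G : SimpleGraph V) (α : ℝ) : Prop :=
  ∀ X : Set V, (X.ncard : ℝ) ≤ α * Fintype.card V →
    2 * X.ncard ≤ {u | u ∉ X ∧ ∃ x ∈ X, G.Adj x u}.ncard

/-!
Pósa's rotation argument. Let `S = END(L, a)`. A rotation `P ++ p :: T ↦ P ++ p :: T.reverse`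
breaks the path edge `p — head T` and creates `last T — p`, and both `head T` and `last T` are
endpoints of rotated paths, hence lie in `S`. So a vertex `u` that is neither in `S` nor next to
`S` on `L` keeps its path neighbours through every sequence of rotations. If such a `u` were
adjacent to the endpoint `x ∈ S` of a rotated path `Q`, maximality of `L` would put `u` on `Q`,
and rotating at `u` would make the successor of `u` on `Q` an endpoint: a vertex of `S` next to
`u` on `L`. Hence every outside neighbour of `S` is a predecessor or a successor of a vertex of
`S` on `L`, and the last vertex of `L` has no successor, so `|N(S)| ≤ 2|S| - 1`. The expansion
property then rules out `|S| ≤ α n`.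
-/

theorem Set.ncard_setOf_exists_le_of_rightUnique {α β : Type*} {s : Set α} {R : α → β → Prop}
    (hR : Relator.RightUnique R) (hs : s.Finite := by toFinite_tac) :
    {b | ∃ a ∈ s, R a b}.ncard ≤ s.ncard := by
  rcases isEmpty_or_nonempty α with hα | hα
  · simp
  set f : β → α := fun b => Classical.epsilon fun a => a ∈ s ∧ R a b
  have hf : ∀ b ∈ {b | ∃ a ∈ s, R a b}, f b ∈ s ∧ R (f b) b := fun _ ⟨a, ha, hab⟩ =>
    Classical.epsilon_spec (p := fun a => a ∈ s ∧ R a _) ⟨a, ha, hab⟩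
  exact Set.ncard_le_ncard_of_injOn f (fun b hb => (hf b hb).1)
    (fun b hb b' hb' heq => hR (hf b hb).2 (heq ▸ (hf b' hb').2)) hs

namespace List

variable {α : Type*}

def Adjacent (l : List α) (x y : α) : Prop := [x, y] <:+: l ∨ [y, x] <:+: l

theorem pair_infix_cons_iff {a x y : α} {l : List α} :
    [x, y] <:+: a :: l ↔ (x = a ∧ l.head? = some y) ∨ [x, y] <:+: l := by
  cases l <;> simp [infix_cons_iff, eq_comm (a := y)]

theorem pair_infix_append_iff {A B : List α} {x y : α} :
    [x, y] <:+: A ++ B ↔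
      [x, y] <:+: A ∨ (A.getLast? = some x ∧ B.head? = some y) ∨ [x, y] <:+: B := by
  induction A with
  | nil => simp
  | cons a A ih =>
    rw [cons_append, pair_infix_cons_iff, ih, pair_infix_cons_iff]
    cases A <;> simp <;> tauto

theorem pair_infix_append_cons_iff {P X : List α} {p x y : α} :
    [x, y] <:+: P ++ p :: X ↔
      [x, y] <:+: P ∨ (P.getLast? = some x ∧ y = p) ∨ (x = p ∧ X.head? = some y) ∨
        [x, y] <:+: X := by
  simp only [pair_infix_append_iff, pair_infix_cons_iff, head?_cons, Option.some.injEq]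
  tauto

theorem pair_infix_reverse_iff {l : List α} {x y : α} :
    [x, y] <:+: l.reverse ↔ [y, x] <:+: l := by
  rw [← reverse_infix, reverse_reverse]
  rfl

theorem Nodup.pair_infix_right_unique {l : List α} (hl : l.Nodup) {v w w' : α}
    (h : [v, w] <:+: l) (h' : [v, w'] <:+: l) : w = w' := by
  induction l with
  | nil => simp at h
  | cons a l ih =>
    obtain ⟨ha, hl⟩ := nodup_cons.mp hl
    rw [pair_infix_cons_iff] at h h'
    rcases h with ⟨rfl, hw⟩ | h <;> rcases h' with ⟨hva, hw'⟩ | h'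
    · exact Option.some.inj (hw.symm.trans hw')
    · exact absurd (h'.subset (by simp)) ha
    · exact absurd (h.subset (by simp)) (hva ▸ ha)
    · exact ih hl h h'

theorem Nodup.pair_infix_left_unique {l : List α} (hl : l.Nodup) {v v' w : α}
    (h : [v, w] <:+: l) (h' : [v', w] <:+: l) : v = v' :=
  (nodup_reverse.mpr hl).pair_infix_right_unique (pair_infix_reverse_iff.mpr h)
    (pair_infix_reverse_iff.mpr h')

theorem Nodup.getLast?_ne_of_pair_infix {l : List α} (hl : l.Nodup) {v w : α}
    (h : [v, w] <:+: l) : l.getLast? ≠ some v := by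
  obtain ⟨s, t, rfl⟩ := h
  have hv : v ∉ w :: t := (nodup_cons.mp (hl.sublist (by simp))).1
  rw [append_assoc, cons_append, cons_append, nil_append, getLast?_append_cons,
    getLast?_cons_cons]
  exact fun hlast => hv (mem_of_getLast? hlast)

theorem getLast?_append_cons_of_ne_nil {P T : List α} {p : α} (hT : T ≠ []) :
    (P ++ p :: T).getLast? = some (T.getLast hT) := by
  simp [getLast?_cons, getLast?_eq_some_getLast hT]

theorem getLast?_append_cons_reverse_of_ne_nil {P T : List α} {p : α} (hT : T ≠ []) :
    (P ++ p :: T.reverse).getLast? = some (T.head hT) := by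
  simp [getLast?_cons, head?_eq_some_head hT]

theorem adjacent_append_cons_head {P T : List α} {p : α} (hT : T ≠ []) :
    (P ++ p :: T).Adjacent p (T.head hT) :=
  .inl <| pair_infix_append_cons_iff.mpr <| .inr <| .inr <| .inl ⟨rfl, head?_eq_some_head hT⟩

theorem exists_eq_append_cons_of_mem {l : List α} {v : α} (hv : v ∈ l)
    (hlast : l.getLast? ≠ some v) : ∃ P T, T ≠ [] ∧ l = P ++ v :: T := by
  obtain ⟨P, T, rfl⟩ := append_of_mem hv
  cases T with
  | nil => simp at hlast
  | cons t T => exact ⟨P, t :: T, cons_ne_nil _ _, rfl⟩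

theorem adjacent_append_cons_reverse_iff {P T : List α} {p u w : α} (hT : T ≠ [])
    (hup : u ≠ p) (hul : u ≠ T.getLast hT) (huh : u ≠ T.head hT) :
    (P ++ p :: T.reverse).Adjacent u w ↔ (P ++ p :: T).Adjacent u w := by
  have hTr : T.reverse.head? = some (T.getLast hT) := by
    rw [head?_reverse, getLast?_eq_some_getLast hT]
  simp only [Adjacent, pair_infix_append_cons_iff, pair_infix_reverse_iff, hTr,
    head?_eq_some_head hT, Option.some.injEq]
  constructor
  · rintro ((h | ⟨h, rfl⟩ | ⟨rfl, h⟩ | h) | (h | ⟨h, rfl⟩ | ⟨rfl, h⟩ | h)) <;>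
      first | exact absurd rfl hup | exact absurd h.symm hul | tauto
  · rintro ((h | ⟨h, rfl⟩ | ⟨rfl, h⟩ | h) | (h | ⟨h, rfl⟩ | ⟨rfl, h⟩ | h)) <;>
      first | exact absurd rfl hup | exact absurd h.symm huh | tauto

theorem IsChain.rotate {P S : List α} {v : α} {R : α → α → Prop} (hR : ∀ a b, R a b → R b a)
    (hS : S ≠ []) (h : (P ++ v :: S).IsChain R) (hadj : R (S.getLast hS) v) :
    (P ++ v :: S.reverse).IsChain R := by
  rw [isChain_split] at h ⊢
  rw [← reverse_concat', isChain_reverse]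
  refine ⟨h.1, (h.2.tail.append (isChain_singleton v) ?_).imp fun _ _ => hR _ _⟩
  simpa [getLast?_eq_some_getLast hS] using hadj

theorem Nodup.ncard_setOf_adjacent_lt {l : List α} (hl : l.Nodup) {S : Set α} {x : α}
    (hx : x ∈ S) (hlast : l.getLast? = some x) (hS : S.Finite) :
    {u | ∃ v ∈ S, l.Adjacent u v}.ncard < 2 * S.ncard := by
  set pred := {u | ∃ v ∈ S, [u, v] <:+: l}
  set succ := {u | ∃ v ∈ S \ {x}, [v, u] <:+: l}
  have hsplit : {u | ∃ v ∈ S, l.Adjacent u v} ⊆ pred ∪ succ := by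
    rintro u ⟨v, hv, h | h⟩
    · exact .inl ⟨v, hv, h⟩
    · exact .inr ⟨v, ⟨hv, fun hvx => hl.getLast?_ne_of_pair_infix h (hvx ▸ hlast)⟩, h⟩
  have hfin : (pred ∪ succ).Finite := l.finite_toSet.subset <| by
    rintro u (⟨v, -, h⟩ | ⟨v, -, h⟩) <;> exact h.subset (by simp)
  have hpred : pred.ncard ≤ S.ncard :=
    Set.ncard_setOf_exists_le_of_rightUnique (fun _ _ _ => hl.pair_infix_left_unique) hS
  have hsucc : succ.ncard + 1 ≤ S.ncard := by
    rw [← Set.ncard_sdiff_singleton_add_one hx hS]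
    exact Nat.add_le_add_right (Set.ncard_setOf_exists_le_of_rightUnique (s := S \ {x})
      (R := fun v u => [v, u] <:+: l) (fun _ _ _ => hl.pair_infix_right_unique)
      hS.sdiff) 1
  calc {u | ∃ v ∈ S, l.Adjacent u v}.ncard
      ≤ (pred ∪ succ).ncard := Set.ncard_le_ncard hsplit hfin
    _ ≤ pred.ncard + succ.ncard := Set.ncard_union_le _ _
    _ < 2 * S.ncard := by omega

end List

section Rotation

open List Relation

variable {V : Type*} {G : SimpleGraph V} {L Q : List V}

theorem Rotation.perm {L' : List V} (h : Rotation G L L') : L'.Perm L := by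
  obtain ⟨P, S, v, -, rfl, rfl, -⟩ := h
  exact ((reverse_perm S).cons v).append_left P

theorem IsPathList.rotation {L' : List V} (hL : IsPathList G L) (h : Rotation G L L') :
    IsPathList G L' := by
  have hperm := h.perm
  obtain ⟨P, S, v, hS, rfl, rfl, hadj⟩ := h
  exact ⟨by simp, hL.2.1.rotate (fun _ _ h => h.symm) hS hadj, hperm.nodup_iff.mpr hL.2.2⟩

theorem perm_of_reflTransGen_rotation (h : ReflTransGen (Rotation G) L Q) : Q.Perm L := by
  induction h with
  | refl => rfl
  | tail _ hrot ih => exact hrot.perm.trans ih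

theorem IsPathList.reflTransGen_rotation (hL : IsPathList G L)
    (h : ReflTransGen (Rotation G) L Q) : IsPathList G Q := by
  induction h with
  | refl => exact hL
  | tail _ hrot ih => exact ih.rotation hrot

theorem IsPathList.mem_of_adj_getLast (hQ : IsPathList G Q)
    (hmax : ∀ L' : List V, IsPathList G L' → L'.length ≤ Q.length) {x u : V}
    (hx : Q.getLast? = some x) (hxu : G.Adj x u) : u ∈ Q := by
  by_contra hu
  have hext : IsPathList G (Q ++ [u]) :=
    ⟨by simp, hQ.2.1.append (isChain_singleton u) (by simpa [hx]),
      hQ.2.2.append (nodup_singleton u) (by simpa using hu)⟩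
  simpa using hmax _ hext

theorem adjacent_iff_of_reflTransGen_rotation (h : ReflTransGen (Rotation G) L Q) {u : V}
    (hu : u ∉ ENDSet G L) (hu' : ∀ v ∈ ENDSet G L, ¬ L.Adjacent u v) (w : V) :
    Q.Adjacent u w ↔ L.Adjacent u w := by
  induction h generalizing w with
  | refl => rfl
  | tail hLQ hrot ih =>
    obtain ⟨P, T, p, hT, rfl, rfl, hadj⟩ := hrot
    have hlast : T.getLast hT ∈ ENDSet G L := ⟨_, hLQ, getLast?_append_cons_of_ne_nil hT⟩
    have hhead : T.head hT ∈ ENDSet G L :=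
      ⟨_, hLQ.tail ⟨P, T, p, hT, rfl, rfl, hadj⟩, getLast?_append_cons_reverse_of_ne_nil hT⟩
    have hup : u ≠ p := by
      rintro rfl
      exact hu' _ hhead ((ih _).mp (adjacent_append_cons_head hT))
    rw [adjacent_append_cons_reverse_iff hT hup (ne_of_mem_of_not_mem hlast hu).symm
      (ne_of_mem_of_not_mem hhead hu).symm, ih]

theorem exists_adjacent_mem_ENDSet_of_adj (hL : IsPathList G L)
    (hmax : ∀ L' : List V, IsPathList G L' → L'.length ≤ L.length) {x u : V}
    (hx : x ∈ ENDSet G L) (hxu : G.Adj x u) (hu : u ∉ ENDSet G L) :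
    ∃ v ∈ ENDSet G L, L.Adjacent u v := by
  obtain ⟨Q, hLQ, hQx⟩ := hx
  have huQ : u ∈ Q := (hL.reflTransGen_rotation hLQ).mem_of_adj_getLast
    (fun L' h => (perm_of_reflTransGen_rotation hLQ).length_eq ▸ hmax L' h) hQx hxu
  have hQu : Q.getLast? ≠ some u := fun h => hu ⟨Q, hLQ, h⟩
  obtain ⟨P, T, hT, rfl⟩ := exists_eq_append_cons_of_mem huQ hQu
  have hTx : T.getLast hT = x :=
    Option.some.inj ((getLast?_append_cons_of_ne_nil hT).symm.trans hQx)
  have hhead : T.head hT ∈ ENDSet G L :=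
    ⟨_, hLQ.tail ⟨P, T, u, hT, rfl, rfl, hTx ▸ hxu⟩,
      getLast?_append_cons_reverse_of_ne_nil hT⟩
  by_contra! hnot
  exact hnot _ hhead ((adjacent_iff_of_reflTransGen_rotation hLQ hu hnot _).mp
    (adjacent_append_cons_head hT))

end Rotation

theorem ENDSet_large_general (G : SimpleGraph V) (α : ℝ) (hexp : IsTwoExpander G α) (L : List V)
    (hL : IsPathList G L)
    (hlongest : ∀ L' : List V, IsPathList G L' → L'.length ≤ L.length) :
    α * Fintype.card V < (ENDSet G L).ncard := by
  by_contra! hsmall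
  obtain ⟨x, hx⟩ : ∃ x, L.getLast? = some x := ⟨_, List.getLast?_eq_some_getLast hL.1⟩
  have hxS : x ∈ ENDSet G L := ⟨L, .refl, hx⟩
  have hN : {u | u ∉ ENDSet G L ∧ ∃ y ∈ ENDSet G L, G.Adj y u} ⊆
      {u | ∃ v ∈ ENDSet G L, L.Adjacent u v} := fun u ⟨hu, _, hy, hyu⟩ =>
    exists_adjacent_mem_ENDSet_of_adj hL hlongest hy hyu hu
  have hexpand := hexp _ hsmall
  have hsub := Set.ncard_le_ncard hN
  have hcount := hL.2.2.ncard_setOf_adjacent_lt hxS hx (Set.toFinite _)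
  omega

/-- In a connected, non-Hamiltonian `(α,2)`-expander on `n` vertices, for any
longest path `L` with endpoint `a` we have `|END(L,a)| > α n`. -/
theorem ENDSet_large (G : SimpleGraph V) (α : ℝ) (hα : 0 < α)
    (hconn : G.Connected) (hexp : IsTwoExpander G α)
    (hnotham : ¬ G.IsHamiltonian)
    (L : List V) (a : V)
    (hL : IsPathList G L) (ha : L.head? = some a)
    (hlongest : ∀ L' : List V, IsPathList G L' → L'.length ≤ L.length) :
    α * Fintype.card V < (ENDSet G L).ncard :=
  ENDSet_large_general G α hexp L hL hlongest
end
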